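/- arXiv:math/0612844 — 5 statements merged into one kernel-verified Lean document; each statement's English description precedes it below -/
import Mathlib

section
/- For n ≥ 1, the signed generating function of excedances over the symmetric group satisfies ∑_{σ ∈ S_n} q^{exc(σ)} (−1)^{cyc(σ)} = −(q−1)^{n−1}, where exc(σ) = #{i ∈ [n] : σ(i) > i} and cyc(σ) is the number of cycles of σ. -/
/-!
The sign of a permutation of `n` points is `(-1) ^ (n - cyc σ)`, and `X ^ exc σ` is the diagonal
product `∏ i, M (σ i) i` of the matrix with `M i j = X` for `j < i` and `1` otherwise. So the sum is
`(-1) ^ n * det M`. Subtracting row `1` of `M` from row `0` leaves `(1 - X, 0, …, 0)`, and expanding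
along that row gives `det M = (1 - X) ^ (n - 1)`.
-/

open Finset Polynomial

/-- Number of excedances of a permutation of `{1,…,n}` (as `Fin n`). -/
def excS {n : ℕ} (σ : Equiv.Perm (Fin n)) : ℕ :=
  (Finset.univ.filter fun i => i < σ i).card

/-- Number of cycles of a permutation, counting fixed points as 1-cycles. -/
def cyc {n : ℕ} (σ : Equiv.Perm (Fin n)) : ℕ :=
  (Finset.univ.filter fun i => σ i = i).card + σ.cycleType.card

theorem Equiv.Perm.neg_one_pow_card_fixed_add_card_cycleType {α R : Type*} [Fintype α]
    [DecidableEq α] [CommRing R] (σ : Equiv.Perm α) :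
    (-1 : R) ^ (#{x | σ x = x} + σ.cycleType.card) = (-1) ^ Fintype.card α * (sign σ : ℤ) := by
  have hcard : #{x | σ x = x} + σ.cycleType.sum = Fintype.card α := by
    rw [sum_cycleType, ← card_univ,
      ← card_filter_add_card_filter_not (s := univ) (fun x => σ x = x)]
    rfl
  have hsign : ((sign σ : ℤ) : R) = (-1) ^ (σ.cycleType.sum + σ.cycleType.card) := by
    rw [sign_of_cycleType]
    push_cast
    rfl
  have hsq : (-1 : R) ^ σ.cycleType.sum * (-1) ^ σ.cycleType.sum = 1 := by
    rw [← pow_add, ← two_mul, pow_mul, neg_one_sq, one_pow]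
  rw [hsign, ← hcard]
  linear_combination (-(-1 : R) ^ #{x | σ x = x} * (-1) ^ σ.cycleType.card) * hsq

theorem neg_one_pow_cyc {R : Type*} [CommRing R] {n : ℕ} (σ : Equiv.Perm (Fin n)) :
    (-1 : R) ^ cyc σ = (-1) ^ n * (Equiv.Perm.sign σ : ℤ) := by
  rw [cyc, σ.neg_one_pow_card_fixed_add_card_cycleType, Fintype.card_fin]

theorem pow_excS_eq_prod {M : Type*} [CommMonoid M] {n : ℕ} (σ : Equiv.Perm (Fin n)) (b : M) :
    b ^ excS σ = ∏ i, if i < σ i then b else 1 := by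
  rw [excS, ← prod_const, prod_filter]

theorem Matrix.det_of_ite_lt {R : Type*} [CommRing R] (m : ℕ) (a b : R) :
    (Matrix.of fun i j : Fin (m + 1) => if j < i then b else a).det = (a - b) ^ m * a := by
  induction m with
  | zero => simp
  | succ m ih =>
    set A := Matrix.of fun i j : Fin (m + 2) => if j < i then b else a
    have hrow : A 0 + (-1 : R) • A 1 = Pi.single 0 (a - b) := by
      ext j
      rcases Fin.eq_zero_or_eq_succ j with rfl | ⟨j, rfl⟩ <;>
        simp [A, Fin.succ_ne_zero, sub_eq_add_neg]
    rw [← det_updateRow_add_smul_self A Fin.zero_ne_one, hrow, det_succ_row_zero]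
    have hminor : ((A.updateRow 0 (Pi.single 0 (a - b))).submatrix Fin.succ (Fin.succAbove 0))
        = Matrix.of fun i j : Fin (m + 1) => if j < i then b else a := by
      ext i j
      simp [A]
    rw [Fintype.sum_eq_single 0 fun j hj => by simp [hj], hminor, ih]
    simp only [Fin.val_zero, pow_zero, one_mul, updateRow_self, Pi.single_eq_same]
    ring

theorem signed_exc_sum_symm (n : ℕ) (hn : 1 ≤ n) :
    ∑ σ : Equiv.Perm (Fin n), (-1 : Polynomial ℤ) ^ cyc σ * X ^ excS σ
      = -((X : Polynomial ℤ) - 1) ^ (n - 1) := by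
  obtain ⟨m, rfl⟩ := Nat.exists_eq_add_of_le' hn
  have hterm (σ : Equiv.Perm (Fin (m + 1))) : (-1 : ℤ[X]) ^ cyc σ * X ^ excS σ
      = (-1) ^ (m + 1) * (((Equiv.Perm.sign σ : ℤ) : ℤ[X]) * ∏ i, if i < σ i then X else 1) := by
    rw [neg_one_pow_cyc, pow_excS_eq_prod]
    ring
  have hsign : (-1 : ℤ[X]) ^ (m + 1) * (-1) ^ m = -1 := by
    rw [← pow_add]
    exact Odd.neg_one_pow ⟨m, by ring⟩
  calc ∑ σ : Equiv.Perm (Fin (m + 1)), (-1 : ℤ[X]) ^ cyc σ * X ^ excS σ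
      = (-1) ^ (m + 1) * (Matrix.of fun i j : Fin (m + 1) => if j < i then X else 1).det := by
        rw [sum_congr rfl fun σ _ => hterm σ, ← mul_sum, Matrix.det_apply']
        rfl
    _ = (-1) ^ (m + 1) * (-1) ^ m * (X - 1) ^ m := by
        rw [Matrix.det_of_ite_lt, ← neg_sub X 1, neg_pow (X - 1)]
        ring
    _ = -(X - 1) ^ (m + 1 - 1) := by rw [hsign, Nat.add_sub_cancel, neg_one_mul]
end

section
/- For n ≥ 1, the signed generating function of excedances over derangements satisfies ∑_{σ ∈ D_n} q^{exc(σ)} (−1)^{cyc(σ)} = −q·[n−1]_q, where D_n ⊆ S_n is the set of permutations without fixed points and [m]_q = (q^m − 1)/(q − 1) = 1 + q + ⋯ + q^{m−1}. -/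
open Finset Polynomial

/-- The matrix with `X` below the diagonal, `0` on it, `1` above it. -/
noncomputable def Mmat (n : ℕ) : Matrix (Fin n) (Fin n) (Polynomial ℤ) :=
  Matrix.of fun i j => if (j : ℕ) < (i : ℕ) then X else if (i : ℕ) = (j : ℕ) then 0 else 1

/-- Row-operation matrix: subtract the next row from each row. -/
noncomputable def Tmat (n : ℕ) : Matrix (Fin n) (Fin n) (Polynomial ℤ) :=
  Matrix.of fun i j => if (i : ℕ) = (j : ℕ) then 1 else if (j : ℕ) = (i : ℕ) + 1 then -1 else 0

/-- The result of the row operations on `Mmat`. -/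
noncomputable def Hmat (n : ℕ) : Matrix (Fin n) (Fin n) (Polynomial ℤ) :=
  Matrix.of fun i j =>
    if (i : ℕ) = n - 1 then (if (j : ℕ) = n - 1 then 0 else X)
    else if (i : ℕ) = (j : ℕ) then -X else if (j : ℕ) = (i : ℕ) + 1 then 1 else 0

set_option linter.unreachableTactic false
set_option linter.unusedTactic false

lemma detH : ∀ n : ℕ, (Hmat (n+1)).det = (-1)^n * (X * ∑ i ∈ Finset.range n, X ^ i) := by
  intro n
  induction n with
  | zero =>
    simp [Matrix.det_fin_one, Hmat]
  | succ n ih =>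
    have hminor0 : (Hmat (n+2)).submatrix Fin.succ Fin.succ = Hmat (n+1) := by
      ext i j
      have hi := i.isLt; have hj := j.isLt
      simp only [Matrix.submatrix_apply, Hmat, Matrix.of_apply, Fin.val_succ]
      split_ifs <;> first | rfl | omega | exact (‹False›).elim
    have hminorL :
        ((Hmat (n+2)).submatrix (Fin.last (n+1)).succAbove Fin.succ).det = 1 := by
      have htri : ((Hmat (n+2)).submatrix (Fin.last (n+1)).succAbove Fin.succ).BlockTriangular
          OrderDual.toDual := by
        intro i j hij
        have hi := i.isLt; have hj := j.isLt
        have hij' : (i : ℕ) < (j : ℕ) := hij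
        simp only [Matrix.submatrix_apply, Fin.succAbove_last, Hmat, Matrix.of_apply,
          Fin.val_succ, Fin.coe_castSucc]
        split_ifs <;> first | rfl | omega | exact (‹False›).elim
      rw [Matrix.det_of_lowerTriangular _ htri]
      apply Finset.prod_eq_one
      intro i _
      have hi := i.isLt
      simp only [Matrix.submatrix_apply, Fin.succAbove_last, Hmat, Matrix.of_apply,
        Fin.val_succ, Fin.coe_castSucc]
      split_ifs <;> first | rfl | omega | exact (‹False›).elim
    rw [show ((n+1)+1 : ℕ) = (n+1).succ from rfl, Matrix.det_succ_column_zero,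
      Fin.sum_univ_succ]
    have h00 : Hmat ((n+1).succ) 0 0 = -X := by
      simp only [Hmat, Matrix.of_apply, Fin.val_zero, Nat.succ_eq_add_one]
      split_ifs <;> first | rfl | omega | exact (‹False›).elim
    rw [Finset.sum_eq_single (Fin.last n)]
    · have hrow : Hmat ((n+1).succ) (Fin.last n).succ 0 = X := by
        simp only [Hmat, Matrix.of_apply, Fin.val_succ, Fin.val_last, Fin.val_zero,
          Nat.succ_eq_add_one]
        split_ifs <;> first | rfl | omega | exact (‹False›).elim
      have hsA : (Fin.last n).succ = Fin.last (n+1) := rfl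
      rw [hrow, h00, hsA, hminorL]
      simp only [Fin.succAbove_zero, Nat.succ_eq_add_one]
      rw [hminor0, ih]
      simp only [Fin.val_last, Fin.val_zero, pow_zero, one_mul, mul_one, geom_sum_succ]
      ring
    · intro b _ hb
      have hrow0 : Hmat ((n+1).succ) b.succ 0 = 0 := by
        have hb' : (b : ℕ) ≠ n := fun h => hb (Fin.ext h)
        have hblt := b.isLt
        simp only [Hmat, Matrix.of_apply, Fin.val_succ, Fin.val_zero, Nat.succ_eq_add_one]
        split_ifs <;> first | rfl | omega | exact (‹False›).elim
      rw [hrow0]; ring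
    · intro h; exact absurd (Finset.mem_univ _) h

lemma detT (n : ℕ) : (Tmat n).det = 1 := by
  have h : (Tmat n).BlockTriangular id := by
    intro i j hij
    have hij' : (j : ℕ) < (i : ℕ) := hij
    simp only [Tmat, Matrix.of_apply]
    split_ifs <;> first | rfl | omega
  rw [Matrix.det_of_upperTriangular h]
  apply Finset.prod_eq_one
  intro i _
  simp [Tmat]

lemma TM (n : ℕ) : Tmat n * Mmat n = Hmat n := by
  apply Matrix.ext
  intro i j
  have hi := i.isLt; have hj := j.isLt
  rw [Matrix.mul_apply]
  have hterm : ∀ k : Fin n, Tmat n i k * Mmat n k j =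
      (if k = i then Mmat n i j else 0) +
      (if (k : ℕ) = (i : ℕ) + 1 then -(Mmat n k j) else 0) := by
    intro k
    simp only [Tmat, Matrix.of_apply]
    by_cases h1 : (i : ℕ) = (k : ℕ)
    · have : k = i := Fin.ext h1.symm
      subst this
      simp
    · have : ¬ k = i := fun h => h1 (congrArg Fin.val h).symm
      rw [if_neg h1, if_neg this]
      by_cases h2 : (k : ℕ) = (i : ℕ) + 1
      · rw [if_pos h2, if_pos h2]; ring
      · rw [if_neg h2, if_neg h2]; ring
  rw [Finset.sum_congr rfl (fun k _ => hterm k), Finset.sum_add_distrib,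
    Finset.sum_ite_eq' Finset.univ i, if_pos (Finset.mem_univ i)]
  by_cases h : (i : ℕ) + 1 < n
  · have hrw : ∀ k : Fin n, ((k : ℕ) = (i : ℕ) + 1) = (k = (⟨(i:ℕ)+1, h⟩ : Fin n)) := by
      intro k; rw [Fin.ext_iff]
    simp only [hrw]
    rw [Finset.sum_ite_eq' Finset.univ (⟨(i:ℕ)+1, h⟩ : Fin n), if_pos (Finset.mem_univ _)]
    simp only [Mmat, Hmat, Matrix.of_apply]
    split_ifs <;> first | ring1 | omega
  · have hz : ∀ k : Fin n, (if (k : ℕ) = (i : ℕ) + 1 then -(Mmat n k j) else 0) = 0 := by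
      intro k
      rw [if_neg]
      have := k.isLt; omega
    rw [Finset.sum_congr rfl (fun k _ => hz k), Finset.sum_const_zero, add_zero]
    simp only [Mmat, Hmat, Matrix.of_apply]
    split_ifs <;> first | ring1 | omega

lemma detM_eq_detH (n : ℕ) : (Mmat n).det = (Hmat n).det := by
  rw [← TM n, Matrix.det_mul, detT, one_mul]

lemma partA (n : ℕ) :
    ∑ σ ∈ Finset.univ.filter (fun σ : Equiv.Perm (Fin n) => ∀ i, σ i ≠ i),
        (-1 : Polynomial ℤ) ^ cyc σ * X ^ excS σ = (-1)^n * (Mmat n).det := by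
  rw [Matrix.det_apply, Finset.mul_sum,
    ← Finset.sum_filter_add_sum_filter_not Finset.univ
      (fun σ : Equiv.Perm (Fin n) => ∀ i, σ i ≠ i)]
  have h2 : ∑ σ ∈ Finset.univ.filter (fun σ : Equiv.Perm (Fin n) => ¬ ∀ i, σ i ≠ i),
      (-1 : Polynomial ℤ)^n * (Equiv.Perm.sign σ • ∏ i, Mmat n (σ i) i) = 0 := by
    apply Finset.sum_eq_zero
    intro σ hσ
    simp only [Finset.mem_filter, not_forall, not_not] at hσ
    obtain ⟨i, hi⟩ := hσ.2
    have hprod : ∏ i, Mmat n (σ i) i = 0 := by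
      apply Finset.prod_eq_zero (Finset.mem_univ i)
      simp [Mmat, hi]
    rw [hprod, smul_zero, mul_zero]
  rw [h2, add_zero]
  apply Finset.sum_congr rfl
  intro σ hσ
  simp only [Finset.mem_filter] at hσ
  have hder : ∀ i, σ i ≠ i := hσ.2
  have hprod : ∏ i, Mmat n (σ i) i = X ^ excS σ := by
    have hentry : ∀ i : Fin n, Mmat n (σ i) i = if i < σ i then X else 1 := by
      intro i
      simp only [Mmat, Matrix.of_apply, Fin.lt_def]
      split_ifs <;> first | rfl | omega |
        (exact absurd (Fin.ext (by omega : ((σ i : ℕ)) = (i : ℕ))) (hder i))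
    rw [Finset.prod_congr rfl (fun i _ => hentry i), Finset.prod_ite,
      Finset.prod_const, Finset.prod_const_one, mul_one, excS]
  have hsupp : σ.support = Finset.univ := by
    ext i; simp [Equiv.Perm.mem_support, hder i]
  have hcyc : cyc σ = σ.cycleType.card := by
    have : (Finset.univ.filter fun i => σ i = i) = ∅ := by
      apply Finset.filter_eq_empty_iff.mpr
      intro i _; exact hder i
    simp [cyc, this]
  have hsign : Equiv.Perm.sign σ = (-1 : ℤˣ) ^ (n + σ.cycleType.card) := by
    rw [Equiv.Perm.sign_of_cycleType, Equiv.Perm.sum_cycleType, hsupp]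
    simp [Finset.card_univ]
  rw [hprod, hsign, Units.smul_def]
  push_cast
  rw [zsmul_eq_mul]
  push_cast
  rw [hcyc, ← mul_assoc, ← pow_add,
    show n + (n + σ.cycleType.card) = 2 * n + σ.cycleType.card by ring,
    pow_add, pow_mul]
  norm_num

theorem signed_exc_sum_derangements (n : ℕ) (hn : 1 ≤ n) :
    ∑ σ ∈ Finset.univ.filter (fun σ : Equiv.Perm (Fin n) => ∀ i, σ i ≠ i),
        (-1 : Polynomial ℤ) ^ cyc σ * X ^ excS σ
      = -((X : Polynomial ℤ) * ∑ i ∈ Finset.range (n - 1), X ^ i) := by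
  obtain ⟨m, rfl⟩ : ∃ m, n = m + 1 := ⟨n - 1, by omega⟩
  rw [partA, detM_eq_detH, detH m, ← mul_assoc, ← pow_add,
    show m + 1 + m = 2 * m + 1 by ring, pow_add, pow_mul]
  norm_num
end

section
/- Let r_1,…,r_k, n be positive integers with n ≥ 2 and r = r_1⋯r_k. Define P_n(q) = ∑_{π ∈ G} q^{exc(π)} (−1)^{cyc(π)} over G = (Z_{r_1} × ⋯ × Z_{r_k}) ≀ S_n. Then P_n(q) = (q^r − 1)·P_{n−1}(q). -/
open Finset Polynomial

/-- A color vector for the group `ℤ_{r 0} × ⋯ × ℤ_{r (k-1)}`. -/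
abbrev Color (k : ℕ) (r : Fin k → ℕ) := ∀ j : Fin k, ZMod (r j)

/-- An element of the wreath product `(ℤ_{r 0} × ⋯ × ℤ_{r (k-1)}) ≀ S_n`:
a color vector for each digit together with an underlying permutation. -/
abbrev GElt (k n : ℕ) (r : Fin k → ℕ) := (Fin n → Color k r) × Equiv.Perm (Fin n)

/-- `r = r_1 ⋯ r_k`. -/
def totR (k : ℕ) (r : Fin k → ℕ) : ℕ := ∏ j, r j

/-- `csum_p(π) = ∑_i z_i^p · ∏_{t<p} χ(z_i^t = 0)`, colors as representatives. -/
def csump {k n : ℕ} (r : Fin k → ℕ) (Z : Fin n → Color k r) (p : Fin k) : ℕ :=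
  ∑ i, (Z i p).val * ∏ t ∈ Finset.Iio p, if (Z i t).val = 0 then 1 else 0

/-- `csum(π) = ∑_p csum_p(π) · ∏_{q ≠ p} r_q`. -/
def csum {k n : ℕ} (r : Fin k → ℕ) (Z : Fin n → Color k r) : ℕ :=
  ∑ p, csump r Z p * ∏ q ∈ Finset.univ.erase p, r q

/-- `exc_A(π)`: number of `i` with zero color vector and `σ(i) > i`. -/
def excA {k n : ℕ} (r : Fin k → ℕ) (π : GElt k n r) : ℕ :=
  (Finset.univ.filter fun i => (∀ j, (π.1 i j).val = 0) ∧ i < π.2 i).card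

/-- `exc(π) = r·exc_A(π) + ∑_p csum_p(π)·∏_{q≠p} r_q`. -/
def exc {k n : ℕ} (r : Fin k → ℕ) (π : GElt k n r) : ℕ :=
  totR k r * excA r π + csum r π.1

/-- `K(q) = ∑_{m=1}^k r_{m+1}⋯r_k ∑_{t=1}^{r_m−1} q^{t·r/r_m}`. -/
noncomputable def Kpoly (k : ℕ) (r : Fin k → ℕ) : Polynomial ℚ :=
  ∑ m : Fin k, ((∏ j ∈ Finset.Ioi m, r j : ℕ) : Polynomial ℚ) *
    ∑ t ∈ Finset.Ico 1 (r m), X ^ (t * ∏ q ∈ Finset.univ.erase m, r q)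

/-- The signed excedance generating function `∑_π q^{exc(π)} (−1)^{cyc(π)}`. -/
noncomputable def Pgen (k : ℕ) (r : Fin k → ℕ) [∀ j, NeZero (r j)] (n : ℕ) : Polynomial ℚ :=
  ∑ π : GElt k n r, (-1) ^ (cyc π.2) * X ^ (exc r π)

/-- The signed excedance generating function over derangements. -/
noncomputable def Qgen (k : ℕ) (r : Fin k → ℕ) [∀ j, NeZero (r j)] (n : ℕ) : Polynomial ℚ :=
  ∑ π ∈ Finset.univ.filter (fun π : GElt k n r => ∀ i, π.2 i ≠ i),
    (-1) ^ (cyc π.2) * X ^ (exc r π)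

/-- Wreath product multiplication `(Z,τ)·(U,σ) = ((z_i + u_{τ⁻¹(i)}), τ∘σ)`. -/
def wmul {k n : ℕ} {r : Fin k → ℕ} (p q : GElt k n r) : GElt k n r :=
  (fun i => p.1 i + q.1 (p.2⁻¹ i), p.2 * q.2)

/-- The identity of the wreath product. -/
def wone {k n : ℕ} {r : Fin k → ℕ} : GElt k n r := (fun _ => 0, 1)

/-- Number of absolute fixed points. -/
def fixn {n : ℕ} (σ : Equiv.Perm (Fin n)) : ℕ :=
  (Finset.univ.filter fun i => σ i = i).card

/-- `ε`: the number of even `r_i`. -/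
def epsn (k : ℕ) (r : Fin k → ℕ) : ℕ := (Finset.univ.filter fun i => 2 ∣ r i).card

/-- `f_n(u,v,w) = ∑_{π involution} u^{fix(π)} v^{exc_A(π)} w^{csum(π)}`,
with `u = X 0`, `v = X 1`, `w = X 2`. -/
noncomputable def fgen (k : ℕ) (r : Fin k → ℕ) [∀ j, NeZero (r j)] (n : ℕ) :
    MvPolynomial (Fin 3) ℚ :=
  ∑ π ∈ Finset.univ.filter (fun π : GElt k n r => wmul π π = wone),
    (MvPolynomial.X 0) ^ (fixn π.2) * (MvPolynomial.X 1) ^ (excA r π) *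
      (MvPolynomial.X 2) ^ (csum r π.1)

/-- `μ = 1` if `r` is odd, `μ = 1 + 2^ε w^{r/2}` if `r` is even. -/
noncomputable def muP (k : ℕ) (r : Fin k → ℕ) : MvPolynomial (Fin 3) ℚ :=
  if 2 ∣ totR k r then 1 + (2 ^ (epsn k r) : MvPolynomial (Fin 3) ℚ) *
    (MvPolynomial.X 2) ^ (totR k r / 2) else 1



def cval {k : ℕ} (r : Fin k → ℕ) (z : Color k r) : ℕ :=
  ∑ p, ((z p).val * ∏ t ∈ Finset.Iio p, if (z t).val = 0 then 1 else 0) *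
    ∏ q ∈ Finset.univ.erase p, r q

noncomputable def Cpoly (k : ℕ) (r : Fin k → ℕ) [∀ j, NeZero (r j)] : Polynomial ℚ :=
  ∑ z : Color k r, X ^ cval r z

lemma cval_zero {k : ℕ} (r : Fin k → ℕ) [∀ j, NeZero (r j)] : cval r (0 : Color k r) = 0 := by
  simp [cval]

lemma zero_color_iff {k : ℕ} {r : Fin k → ℕ} [∀ j, NeZero (r j)] (z : Color k r) :
    (∀ j, (z j).val = 0) ↔ z = 0 := by
  simp [funext_iff, ZMod.val_eq_zero]


lemma detM {R : Type*} [CommRing R] (n : ℕ) (x y : R) :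
    (Matrix.of fun i j : Fin (n+1) => if (j:ℕ) < (i:ℕ) then x else y).det = y * (y - x) ^ n := by
  set M : Matrix (Fin (n+1)) (Fin (n+1)) R :=
    Matrix.of fun i j => if (j:ℕ) < (i:ℕ) then x else y with hM
  set S : Matrix (Fin (n+1)) (Fin (n+1)) R :=
    Matrix.of fun i j => if (i:ℕ) = (j:ℕ) then 1 else if (i:ℕ)+1 = (j:ℕ) then -1 else 0 with hS
  have hdetS : S.det = 1 := by
    rw [Matrix.det_of_upperTriangular]
    · simp [S]
    · intro i j hij
      rw [id_eq, id_eq, Fin.lt_def] at hij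
      simp only [S, Matrix.of_apply]
      rw [if_neg (show ¬((i:ℕ) = (j:ℕ)) by omega),
        if_neg (show ¬((i:ℕ)+1 = (j:ℕ)) by omega)]
  have hentry : ∀ i j : Fin (n+1), (M * S) i j
      = (if (j:ℕ) < (i:ℕ) then x else y)
        + ∑ kk : Fin (n+1), if (kk:ℕ)+1 = (j:ℕ) then -(M i kk) else 0 := by
    intro i j
    rw [Matrix.mul_apply]
    have h : ∀ kk : Fin (n+1), M i kk * S kk j
        = (if kk = j then M i kk else 0) + (if (kk:ℕ)+1 = (j:ℕ) then -(M i kk) else 0) := by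
      intro kk
      simp only [S, Matrix.of_apply, Fin.ext_iff]
      by_cases h1 : (kk:ℕ) = (j:ℕ)
      · rw [if_pos h1, if_pos h1, if_neg (show ¬((kk:ℕ)+1 = (j:ℕ)) by omega)]
        ring
      · rw [if_neg h1, if_neg h1]
        by_cases h2 : (kk:ℕ)+1 = (j:ℕ)
        · rw [if_pos h2, if_pos h2]; ring
        · rw [if_neg h2, if_neg h2]; ring
    rw [Finset.sum_congr rfl fun kk _ => h kk, Finset.sum_add_distrib, Finset.sum_ite_eq']
    simp [M]
  have hMS : (M * S).BlockTriangular OrderDual.toDual := by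
    intro i j hij
    have hij' : (i:ℕ) < (j:ℕ) := hij
    have hjn := j.isLt
    rw [hentry]
    have hsum : (∑ kk : Fin (n+1), if (kk:ℕ)+1 = (j:ℕ) then -(M i kk) else 0)
        = -(M i ⟨(j:ℕ)-1, by omega⟩) := by
      rw [Finset.sum_eq_single (⟨(j:ℕ)-1, by omega⟩ : Fin (n+1))]
      · rw [if_pos (show (j:ℕ)-1+1 = (j:ℕ) by omega)]
      · intro b _ hb
        exact if_neg (fun hh => hb (Fin.ext (show (b:ℕ) = (j:ℕ)-1 by omega)))
      · exact fun h => absurd (Finset.mem_univ _) h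
    rw [hsum, if_neg (show ¬((j:ℕ) < (i:ℕ)) by omega)]
    have hv : M i ⟨(j:ℕ)-1, by omega⟩ = y := by
      simp only [M, Matrix.of_apply]
      exact if_neg (show ¬((j:ℕ)-1 < (i:ℕ)) by omega)
    rw [hv]; ring
  have hdiag0 : (M * S) 0 0 = y := by
    rw [hentry]
    have hz : (∑ kk : Fin (n+1), if (kk:ℕ)+1 = (((0:Fin (n+1))):ℕ) then -(M 0 kk) else 0) = 0 :=
      Finset.sum_eq_zero fun b _ => if_neg (show ¬((b:ℕ)+1 = ((0 : Fin (n+1)):ℕ)) by simp)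
    rw [hz]
    simp
  have hdiag : ∀ i : Fin (n+1), (i:ℕ) ≠ 0 → (M * S) i i = y - x := by
    intro i hi
    have hin := i.isLt
    rw [hentry]
    have hsum : (∑ kk : Fin (n+1), if (kk:ℕ)+1 = (i:ℕ) then -(M i kk) else 0)
        = -(M i ⟨(i:ℕ)-1, by omega⟩) := by
      rw [Finset.sum_eq_single (⟨(i:ℕ)-1, by omega⟩ : Fin (n+1))]
      · rw [if_pos (show (i:ℕ)-1+1 = (i:ℕ) by omega)]
      · intro b _ hb
        exact if_neg (fun hh => hb (Fin.ext (show (b:ℕ) = (i:ℕ)-1 by omega)))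
      · exact fun h => absurd (Finset.mem_univ _) h
    rw [hsum, if_neg (show ¬((i:ℕ) < (i:ℕ)) by omega)]
    have hv : M i ⟨(i:ℕ)-1, by omega⟩ = x := by
      simp only [M, Matrix.of_apply]
      exact if_pos (show (i:ℕ)-1 < (i:ℕ) by omega)
    rw [hv]; ring
  have hMSdet : (M * S).det = y * (y - x) ^ n := by
    rw [Matrix.det_of_lowerTriangular _ hMS, Fin.prod_univ_succ, hdiag0]
    congr 1
    rw [Finset.prod_congr rfl fun i _ => hdiag i.succ (by simp)]
    simp [Finset.prod_const, Finset.card_univ]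
  calc M.det = M.det * S.det := by rw [hdetS, mul_one]
    _ = (M * S).det := (Matrix.det_mul M S).symm
    _ = y * (y - x) ^ n := hMSdet


private lemma negpow (a s c n : ℕ) (h : a + s = n) :
    ((-1:Polynomial ℚ))^(a+c) = (-1)^n * (-1)^(s+c) := by
  subst h
  rw [← pow_add]
  have h2 : a + s + (s + c) = (a + c) + 2 * s := by ring
  rw [h2, pow_add (-1 : Polynomial ℚ) (a+c) (2*s), pow_mul, neg_one_sq, one_pow, mul_one]

lemma neg_one_cyc {n : ℕ} (σ : Equiv.Perm (Fin n)) :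
    ((-1 : Polynomial ℚ)) ^ cyc σ = (-1)^n * ((Equiv.Perm.sign σ : ℤ) : Polynomial ℚ) := by
  have hs : ((Equiv.Perm.sign σ : ℤ) : Polynomial ℚ)
      = (-1) ^ (σ.support.card + σ.cycleType.card) := by
    rw [Equiv.Perm.sign_of_cycleType, Equiv.Perm.sum_cycleType]
    push_cast
    ring
  have hn : (Finset.univ.filter fun i => σ i = i).card + σ.support.card = n := by
    have := Finset.card_filter_add_card_filter_not (s := (Finset.univ : Finset (Fin n)))
      (p := fun i => σ i = i)
    simpa [Equiv.Perm.support] using this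
  rw [hs, cyc]
  exact negpow _ _ _ _ hn


lemma csum_eq {k n : ℕ} (r : Fin k → ℕ) (Z : Fin n → Color k r) :
    csum r Z = ∑ i, cval r (Z i) := by
  unfold csum csump cval
  simp only [Finset.sum_mul]
  exact Finset.sum_comm

lemma exc_eq {k n : ℕ} (r : Fin k → ℕ) [∀ j, NeZero (r j)]
    (Z : Fin n → Color k r) (σ : Equiv.Perm (Fin n)) :
    exc r (Z, σ) = ∑ i, (totR k r * (if Z i = 0 ∧ i < σ i then 1 else 0) + cval r (Z i)) := by
  rw [Finset.sum_add_distrib, ← Finset.mul_sum]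
  unfold exc excA
  rw [csum_eq]
  congr 2
  rw [Finset.card_filter]
  exact Finset.sum_congr rfl fun i _ => by simp [ZMod.val_eq_zero, funext_iff]

lemma color_sum {k : ℕ} (r : Fin k → ℕ) [∀ j, NeZero (r j)] (P : Prop) [Decidable P] :
    ∑ z : Color k r, (X : Polynomial ℚ) ^ (totR k r * (if z = 0 ∧ P then 1 else 0) + cval r z)
      = if P then X ^ totR k r + (Cpoly k r - 1) else Cpoly k r := by
  have hC : Cpoly k r
      = 1 + ∑ z ∈ Finset.univ.erase (0 : Color k r), (X : Polynomial ℚ) ^ cval r z := by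
    rw [Cpoly, ← Finset.add_sum_erase _ _ (Finset.mem_univ (0 : Color k r)), cval_zero, pow_zero]
  by_cases hP : P
  · rw [if_pos hP]
    rw [← Finset.add_sum_erase _ _ (Finset.mem_univ (0 : Color k r))]
    rw [if_pos ⟨rfl, hP⟩, cval_zero, mul_one, Nat.add_zero]
    have h2 : ∀ z ∈ Finset.univ.erase (0 : Color k r),
        (X : Polynomial ℚ) ^ (totR k r * (if z = 0 ∧ P then 1 else 0) + cval r z)
          = X ^ cval r z := by
      intro z hz
      rw [if_neg (fun hh => (Finset.mem_erase.mp hz).1 hh.1), mul_zero, Nat.zero_add]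
    rw [Finset.sum_congr rfl h2, hC]
    ring
  · rw [if_neg hP, Cpoly]
    exact Finset.sum_congr rfl fun z _ => by
      rw [if_neg (fun hh => hP hh.2), mul_zero, Nat.zero_add]

lemma Pgen_closed (k : ℕ) (r : Fin k → ℕ) [∀ j, NeZero (r j)] (m : ℕ) :
    Pgen k r (m+1) = -(Cpoly k r) * ((X : Polynomial ℚ) ^ totR k r - 1) ^ m := by
  set x : Polynomial ℚ := X ^ totR k r + (Cpoly k r - 1) with hx
  set y : Polynomial ℚ := Cpoly k r with hy
  have key : ∀ σ : Equiv.Perm (Fin (m+1)),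
      (∑ Z : Fin (m+1) → Color k r, (X : Polynomial ℚ) ^ exc r (Z, σ))
        = ∏ i, (if ((i : Fin (m+1)):ℕ) < ((σ i):ℕ) then x else y) := by
    intro σ
    have h1 : ∀ Z : Fin (m+1) → Color k r, (X : Polynomial ℚ) ^ exc r (Z, σ)
        = ∏ i, X ^ (totR k r * (if Z i = 0 ∧ i < σ i then 1 else 0) + cval r (Z i)) := by
      intro Z
      rw [exc_eq, ← Finset.prod_pow_eq_pow_sum]
    have hps := Finset.prod_univ_sum (fun _ : Fin (m+1) => (Finset.univ : Finset (Color k r)))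
      (fun i z => (X:Polynomial ℚ) ^ (totR k r * (if z = 0 ∧ i < σ i then 1 else 0) + cval r z))
    rw [Finset.sum_congr rfl fun Z _ => h1 Z, ← Fintype.piFinset_univ, ← hps]
    refine Finset.prod_congr rfl fun i _ => ?_
    rw [color_sum r (i < σ i)]
    by_cases h : i < σ i
    · rw [if_pos h, if_pos (Fin.lt_def.mp h), hx]
    · rw [if_neg h, if_neg (fun hh => h (Fin.lt_def.mpr hh)), hy]
  have step1 : Pgen k r (m+1)
      = ∑ σ : Equiv.Perm (Fin (m+1)), (-1:Polynomial ℚ)^(cyc σ)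
          * ∏ i, (if ((i : Fin (m+1)):ℕ) < ((σ i):ℕ) then x else y) := by
    rw [Pgen, Fintype.sum_prod_type, Finset.sum_comm]
    refine Finset.sum_congr rfl fun σ _ => ?_
    rw [show (∑ Z : Fin (m+1) → Color k r, (-1:Polynomial ℚ) ^ cyc (Z, σ).2 * X ^ exc r (Z, σ))
        = ∑ Z : Fin (m+1) → Color k r, (-1:Polynomial ℚ) ^ cyc σ * X ^ exc r (Z, σ) from rfl,
      ← Finset.mul_sum, key σ]
  have step2 : Pgen k r (m+1)
      = (-1:Polynomial ℚ)^(m+1) * ∑ σ : Equiv.Perm (Fin (m+1)),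
          ((Equiv.Perm.sign σ : ℤ) : Polynomial ℚ)
            * ∏ i, (if ((i : Fin (m+1)):ℕ) < ((σ i):ℕ) then x else y) := by
    rw [step1, Finset.mul_sum]
    exact Finset.sum_congr rfl fun σ _ => by rw [neg_one_cyc]; ring
  have hdet := detM (R := Polynomial ℚ) m x y
  rw [Matrix.det_apply'] at hdet
  have hdet2 : (∑ σ : Equiv.Perm (Fin (m+1)),
      ((Equiv.Perm.sign σ : ℤ) : Polynomial ℚ)
        * ∏ i, (if ((i : Fin (m+1)):ℕ) < ((σ i):ℕ) then x else y)) = y * (y - x) ^ m := by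
    rw [← hdet]
    exact Finset.sum_congr rfl fun σ _ => by
      simp only [Matrix.of_apply]
  rw [step2, hdet2]
  have hyx : y - x = -((X : Polynomial ℚ) ^ totR k r - 1) := by rw [hx, hy]; ring
  rw [hyx, neg_pow ((X : Polynomial ℚ) ^ totR k r - 1) m]
  have hodd : (-1:Polynomial ℚ)^(m+1) * (-1:Polynomial ℚ)^m = -1 := by
    rw [← pow_add]
    exact Odd.neg_one_pow ⟨m, by ring⟩
  calc (-1:Polynomial ℚ)^(m+1) * (y * ((-1)^m * (X ^ totR k r - 1) ^ m))
      = ((-1:Polynomial ℚ)^(m+1) * (-1)^m) * (y * (X ^ totR k r - 1) ^ m) := by ring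
    _ = -(Cpoly k r) * (X ^ totR k r - 1) ^ m := by rw [hodd, hy]; ring

theorem Pgen_recurrence (k : ℕ) (r : Fin k → ℕ) [∀ j, NeZero (r j)]
    (hk : 1 ≤ k) (hr : ∀ j, 1 ≤ r j) (n : ℕ) (hn : 2 ≤ n) :
    Pgen k r n = ((X : Polynomial ℚ) ^ totR k r - 1) * Pgen k r (n - 1) := by
  obtain ⟨m, rfl⟩ : ∃ m, n = m + 2 := ⟨n - 2, by omega⟩
  rw [show m + 2 - 1 = m + 1 from rfl, show m + 2 = (m+1)+1 from rfl,
    Pgen_closed, Pgen_closed, pow_succ]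
  ring
end

section
/- Let π = (Z, σ) ∈ (Z_{r_1} × ⋯ × Z_{r_k}) ≀ S_n, acting on the colored alphabet Σ = {i^v : i ∈ [n], v ∈ Z_{r_1}×⋯×Z_{r_k}} (with the color-respecting action). With the total order on Σ defined by i^v ≺ j^w iff (v ≠ w and v ≺ w) or (v = w and i < j), where v ≺ w iff the r_max-ary value of w is less than that of v, the total number of excedances #{x ∈ Σ : π(x) ≻ x} equals r·exc_A(π) + ∑_{p=1}^k csum_p(π)·∏_{q≠p} r_q, where r = r_1⋯r_k. -/
/-!
Count the excedances fibre by fibre: for fixed `i`, the letter `i^v` is sent to `σ(i)^{v + z_i}`.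
If `z_i = 0` the colour is unchanged, so `i^v` is an excedance for all `r` colours `v` exactly
when `i < σ(i)`. Otherwise `v + z_i ≠ v`, and since every digit is below `r_max` the two
`r_max`-ary values compare like their digits at the first coordinate `p` where `z_i` is nonzero.
There `v_p + z_i^p` wraps around below `v_p` for exactly `z_i^p` values of `v_p`, the other
coordinates being free; this gives `z_i^p ∏_{q ≠ p} r_q`, and the factor `∏_{t<p} χ(z_i^t = 0)`
in `csum_p` singles out exactly this first nonzero coordinate.
-/

open Finset Polynomial

/-- The `r_max`-ary positional value of a color vector. -/
def Nval {k : ℕ} (r : Fin k → ℕ) (v : Color k r) : ℕ :=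
  ∑ j : Fin k, (v j).val * (Finset.univ.sup r) ^ (k - 1 - (j : ℕ))

/-- The order `≺` on the colored alphabet `Σ`:
`i^v ≺ j^w` iff (`v ≠ w` and the value of `w` is less than that of `v`)
or (`v = w` and `i < j`). -/
def sigmaLt {k n : ℕ} (r : Fin k → ℕ) (x y : Fin n × Color k r) : Prop :=
  (x.2 ≠ y.2 ∧ Nval r y.2 < Nval r x.2) ∨ (x.2 = y.2 ∧ x.1 < y.1)

instance {k n : ℕ} (r : Fin k → ℕ) : DecidableRel (sigmaLt (k := k) (n := n) r) :=
  fun _ _ => by unfold sigmaLt; infer_instance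

/-- The total number of excedances of `π` acting on the colored alphabet:
`#{x ∈ Σ : π(x) ≻ x}`, where `π(i^v) = σ(i)^{v + z_i}`. -/
def excTot {k n : ℕ} (r : Fin k → ℕ) [∀ j, NeZero (r j)] (π : GElt k n r) : ℕ :=
  ((Finset.univ : Finset (Fin n × Color k r)).filter fun x =>
    sigmaLt r x (π.2 x.1, fun j => x.2 j + π.1 x.1 j)).card

section PositionalValue

variable {B : ℕ}

theorem Fin.sum_mul_pow_sub_succ {k : ℕ} (d : Fin (k + 1) → ℕ) :
    ∑ j : Fin (k + 1), d j * B ^ (k + 1 - 1 - j) =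
      d 0 * B ^ k + ∑ j : Fin k, d j.succ * B ^ (k - 1 - j) := by
  rw [Fin.sum_univ_succ]
  congr 1
  refine Finset.sum_congr rfl fun j _ => ?_
  simp only [Fin.val_succ]
  congr 2
  omega

theorem sum_mul_pow_lt_pow : ∀ {k : ℕ} (d : Fin k → ℕ), (∀ j, d j < B) →
    ∑ j : Fin k, d j * B ^ (k - 1 - j) < B ^ k
  | 0, _, hd => by simp
  | k + 1, d, hd => by
    rw [Fin.sum_mul_pow_sub_succ]
    have htail := sum_mul_pow_lt_pow (fun j => d j.succ) fun j => hd j.succ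
    calc d 0 * B ^ k + ∑ j : Fin k, d j.succ * B ^ (k - 1 - j)
        < (d 0 + 1) * B ^ k := by linarith
      _ ≤ B * B ^ k := Nat.mul_le_mul_right _ (hd 0)
      _ = B ^ (k + 1) := (pow_succ' B k).symm

theorem sum_mul_pow_lt_of_lex : ∀ {k : ℕ} (d e : Fin k → ℕ), (∀ j, d j < B) →
    ∀ p : Fin k, (∀ j < p, d j = e j) → d p < e p →
    ∑ j : Fin k, d j * B ^ (k - 1 - j) < ∑ j : Fin k, e j * B ^ (k - 1 - j)
  | 0, _, _, _, p, _, _ => p.elim0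
  | k + 1, d, e, hd, p, hagree, hp => by
    rw [Fin.sum_mul_pow_sub_succ, Fin.sum_mul_pow_sub_succ]
    cases p using Fin.cases with
    | zero =>
      have htail := sum_mul_pow_lt_pow (fun j => d j.succ) fun j => hd j.succ
      calc d 0 * B ^ k + ∑ j : Fin k, d j.succ * B ^ (k - 1 - j)
          < (d 0 + 1) * B ^ k := by linarith
        _ ≤ e 0 * B ^ k := Nat.mul_le_mul_right _ hp
        _ ≤ _ := Nat.le_add_right _ _
    | succ q =>
      rw [hagree 0 (Fin.succ_pos q)]
      exact Nat.add_lt_add_left (sum_mul_pow_lt_of_lex (fun j => d j.succ) (fun j => e j.succ)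
        (fun j => hd j.succ) q (fun j hj => hagree j.succ (Fin.succ_lt_succ_iff.2 hj)) hp) _

end PositionalValue

theorem Fintype.card_filter_apply {ι : Type*} [Fintype ι] [DecidableEq ι] {α : ι → Type*}
    [∀ i, Fintype (α i)] [∀ i, DecidableEq (α i)] (i : ι) (P : α i → Prop) [DecidablePred P] :
    #{f : ∀ i, α i | P (f i)} = #{a | P a} * ∏ j ∈ univ.erase i, Fintype.card (α j) := by
  rw [card_eq_sum_card_fiberwise (f := fun f => f i) (t := {a | P a})
    (fun f hf => by simpa using hf), ← smul_eq_mul, ← sum_const]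
  refine Finset.sum_congr rfl fun a ha => ?_
  rw [filter_filter, ← Fintype.piFinset_univ]
  have : ∀ f : ∀ i, α i, P (f i) ∧ f i = a ↔ f i = a := fun f =>
    ⟨And.right, fun h => ⟨h ▸ (mem_filter.1 ha).2, h⟩⟩
  simp only [this, card_filter_piFinset_eq_of_mem (fun _ => univ) i (mem_univ a), card_univ]

theorem ZMod.card_filter_val_add_lt_val {m : ℕ} [NeZero m] (z : ZMod m) :
    #{a : ZMod m | (a + z).val < a.val} = z.val := by
  have hwrap : ∀ a : ZMod m, (a + z).val < a.val ↔ m ≤ a.val + z.val := fun a => by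
    constructor
    · intro h
      by_contra hlt
      rw [ZMod.val_add_of_lt (not_le.1 hlt)] at h
      omega
    · intro h
      rw [ZMod.val_add_of_le h]
      have := z.val_lt
      omega
  simp only [hwrap]
  obtain ⟨m, rfl⟩ : ∃ m', m = m' + 1 := Nat.exists_eq_succ_of_ne_zero (NeZero.ne m)
  have hz := z.val_lt
  change #{a : Fin (m + 1) | m + 1 ≤ (a : ℕ) + z.val} = z.val
  have hsplit := card_filter_add_card_filter_not (s := univ)
    fun a : Fin (m + 1) => (a : ℕ) < m + 1 - z.val
  rw [Fin.card_filter_val_lt, card_univ, Fintype.card_fin] at hsplit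
  rw [filter_congr fun (a : Fin (m + 1)) _ =>
    show m + 1 ≤ (a : ℕ) + z.val ↔ ¬(a : ℕ) < m + 1 - z.val by omega]
  omega

theorem sum_val_mul_prod_Iio_eq {k : ℕ} {r : Fin k → ℕ} {z : Color k r} {p : Fin k} (hzp : z p ≠ 0)
    (hz : ∀ j < p, z j = 0) (c : Fin k → ℕ) :
    ∑ q, (z q).val * (∏ t ∈ Iio q, if (z t).val = 0 then 1 else 0) * c q = (z p).val * c p := by
  simp only [ZMod.val_eq_zero]
  rw [Fintype.sum_eq_single p]
  · rw [prod_eq_one fun t ht => if_pos (hz t (mem_Iio.1 ht)), mul_one]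
  · intro q hq
    rcases hq.lt_or_gt with hlt | hgt
    · simp [hz q hlt]
    · rw [prod_eq_zero (mem_Iio.2 hgt) (if_neg hzp), mul_zero, zero_mul]

section ColoredAlphabet

variable {k : ℕ} {r : Fin k → ℕ} [∀ j, NeZero (r j)]

theorem nval_lt_nval_of_lex (v w : Color k r) (p : Fin k) (hagree : ∀ j < p, v j = w j)
    (hp : (v p).val < (w p).val) : Nval r v < Nval r w :=
  sum_mul_pow_lt_of_lex _ _ (fun j => (v j).val_lt.trans_le (le_sup (mem_univ j))) p
    (fun j hj => by rw [hagree j hj]) hp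

theorem nval_lt_nval_iff_of_eqOn_Iio (v w : Color k r) (p : Fin k) (hagree : ∀ j < p, w j = v j)
    (hp : w p ≠ v p) : Nval r w < Nval r v ↔ (w p).val < (v p).val :=
  ⟨fun h => (lt_or_gt_of_ne ((ZMod.val_injective _).ne hp)).resolve_right fun h' =>
      (nval_lt_nval_of_lex v w p (fun j hj => (hagree j hj).symm) h').asymm h,
    nval_lt_nval_of_lex w v p hagree⟩

theorem sigmaLt_add_iff {n : ℕ} {z : Color k r} {p : Fin k} (hzp : z p ≠ 0)
    (hz : ∀ j < p, z j = 0) (a b : Fin n) (v : Color k r) :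
    sigmaLt r (a, v) (b, v + z) ↔ (v p + z p).val < (v p).val := by
  have hne : v ≠ v + z := fun h => hzp (by simpa using congrFun h p)
  have hNval : Nval r (v + z) < Nval r v ↔ (v p + z p).val < (v p).val :=
    nval_lt_nval_iff_of_eqOn_Iio v (v + z) p (fun j hj => by simp [hz j hj]) (by simpa using hzp)
  simp [sigmaLt, hne, hNval]

theorem card_sigmaLt_add_of_ne_zero {n : ℕ} {z : Color k r} {p : Fin k} (hzp : z p ≠ 0)
    (hz : ∀ j < p, z j = 0) (a b : Fin n) :
    #{v : Color k r | sigmaLt r (a, v) (b, v + z)} = (z p).val * ∏ q ∈ univ.erase p, r q := by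
  simp only [sigmaLt_add_iff hzp hz a b]
  rw [Fintype.card_filter_apply (α := fun j => ZMod (r j)) p fun c => (c + z p).val < c.val,
    ZMod.card_filter_val_add_lt_val]
  simp [ZMod.card]

theorem card_sigmaLt_self {n : ℕ} (a b : Fin n) :
    #{v : Color k r | sigmaLt r (a, v) (b, v)} = if a < b then totR k r else 0 := by
  by_cases hab : a < b <;> simp [sigmaLt, hab, totR]

theorem card_sigmaLt_add {n : ℕ} (z : Color k r) (a b : Fin n) :
    #{v : Color k r | sigmaLt r (a, v) (b, v + z)} =
      (if (∀ j, (z j).val = 0) ∧ a < b then totR k r else 0) +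
        ∑ p, (z p).val * (∏ t ∈ Iio p, if (z t).val = 0 then 1 else 0) *
          ∏ q ∈ univ.erase p, r q := by
  by_cases hz0 : z = 0
  · subst hz0
    simp [card_sigmaLt_self]
  · obtain ⟨p, hzp, hmin⟩ := WellFounded.has_min wellFounded_lt {j | z j ≠ 0}
      (Function.ne_iff.1 hz0)
    have hbelow : ∀ j < p, z j = 0 := fun j hj => by_contra fun h => hmin j h hj
    have hnonzero : ¬∀ j, (z j).val = 0 := fun h => hzp ((ZMod.val_eq_zero _).1 (h p))
    rw [card_sigmaLt_add_of_ne_zero hzp hbelow, sum_val_mul_prod_Iio_eq hzp hbelow,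
      if_neg fun h => hnonzero h.1, zero_add]

end ColoredAlphabet

theorem excTot_eq_general (k n : ℕ) (r : Fin k → ℕ) [∀ j, NeZero (r j)]
    (π : GElt k n r) :
    excTot r π = totR k r * excA r π +
      ∑ p, csump r π.1 p * ∏ q ∈ Finset.univ.erase p, r q := by
  have hfiber : excTot r π = ∑ i, #{v : Color k r | sigmaLt r (i, v) (π.2 i, v + π.1 i)} := by
    rw [excTot, card_filter, Fintype.sum_prod_type]
    simp only [card_filter]
    rfl
  have hexcA : totR k r * excA r π =
      ∑ i, if (∀ j, (π.1 i j).val = 0) ∧ i < π.2 i then totR k r else 0 := by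
    rw [excA, card_filter, mul_sum]
    simp only [mul_ite, mul_one, mul_zero]
  have hcsum : ∑ p, csump r π.1 p * ∏ q ∈ univ.erase p, r q =
      ∑ i, ∑ p, (π.1 i p).val * (∏ t ∈ Iio p, if (π.1 i t).val = 0 then 1 else 0) *
        ∏ q ∈ univ.erase p, r q := by
    simp only [csump, sum_mul]
    exact sum_comm
  rw [hfiber, hexcA, hcsum, ← sum_add_distrib]
  exact Fintype.sum_congr _ _ fun i => card_sigmaLt_add (π.1 i) i (π.2 i)

theorem excTot_eq (k n : ℕ) (r : Fin k → ℕ) [∀ j, NeZero (r j)]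
    (hr : ∀ j, 1 ≤ r j) (π : GElt k n r) :
    excTot r π = totR k r * excA r π +
      ∑ p, csump r π.1 p * ∏ q ∈ Finset.univ.erase p, r q :=
  excTot_eq_general k n r π
end

section
/- Let r = r_1⋯r_k be odd. The number of involutions π in (Z_{r_1}×⋯×Z_{r_k}) ≀ S_n with exc(π) = m is 0 unless r divides m, in which case, with y = m/r, it equals y!·C(n; y, y, n−2y)·(r/2)^y = (n!/(y!·(n−2y)!))·(r/2)^y, where (r/2)^y means r^y/2^y. -/
open Finset Polynomial

section AuxCount

variable {k n : ℕ} {r : Fin k → ℕ} [∀ j, NeZero (r j)]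

lemma totR_ne_zero : totR k r ≠ 0 := by
  unfold totR
  rw [Finset.prod_ne_zero_iff]
  exact fun j _ => NeZero.ne (r j)

lemma winv_of (π : GElt k n r) (h1 : π.2 * π.2 = 1)
    (h2 : ∀ i, π.1 i + π.1 (π.2 i) = 0) : wmul π π = wone := by
  have hinv : π.2⁻¹ = π.2 := inv_eq_of_mul_eq_one_right h1
  unfold wmul wone
  rw [Prod.mk.injEq]
  refine ⟨funext fun i => by rw [hinv]; exact h2 i, h1⟩

lemma winv_def {π : GElt k n r} (h : wmul π π = wone) :
    (π.2 * π.2 = 1) ∧ (∀ i, π.1 i + π.1 (π.2 i) = 0) ∧ (∀ i, π.2 (π.2 i) = i) := by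
  unfold wmul wone at h
  rw [Prod.mk.injEq] at h
  obtain ⟨hz, hs⟩ := h
  have hinv : π.2⁻¹ = π.2 := inv_eq_of_mul_eq_one_right hs
  have happ : ∀ i, π.2 (π.2 i) = i := by
    intro i
    have := congrArg (fun σ : Equiv.Perm (Fin n) => σ i) hs
    simpa [Equiv.Perm.mul_apply] using this
  refine ⟨hs, fun i => ?_, happ⟩
  have h := congrFun hz (π.2 i)
  simp only [hinv, happ i] at h
  rw [add_comm] at h
  exact h

lemma odd_r (hodd : Odd (totR k r)) (j : Fin k) : Odd (r j) := by
  rcases Nat.even_or_odd (r j) with he | ho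
  · exfalso
    have hdvd : r j ∣ totR k r := Finset.dvd_prod_of_mem _ (Finset.mem_univ j)
    have h2 : 2 ∣ totR k r := dvd_trans (he.two_dvd) hdvd
    exact (Nat.not_even_iff_odd.2 hodd) (even_iff_two_dvd.2 h2)
  · exact ho

lemma fixed_zero (hodd : Odd (totR k r)) {π : GElt k n r} (hπ : wmul π π = wone)
    (i : Fin n) (hfix : π.2 i = i) : π.1 i = 0 := by
  obtain ⟨-, h2, -⟩ := winv_def hπ
  have h := h2 i
  rw [hfix] at h
  funext j
  have hj : π.1 i j + π.1 i j = 0 := by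
    have := congrFun h j
    simpa using this
  have h2j : (2 : ZMod (r j)) * π.1 i j = 0 := by rw [two_mul]; exact hj
  have hu : IsUnit (2 : ZMod (r j)) := by
    have : IsUnit ((2 : ℕ) : ZMod (r j)) :=
      (ZMod.isUnit_iff_coprime 2 (r j)).2 ((odd_r hodd j).coprime_two_left)
    simpa using this
  exact (hu.mul_right_eq_zero).1 h2j

/-- the weight of a single color vector -/
def wgt (r : Fin k → ℕ) (c : Color k r) : ℕ :=
  ∑ p, (c p).val * (∏ t ∈ Finset.Iio p, if (c t).val = 0 then 1 else 0) *
    ∏ q ∈ Finset.univ.erase p, r q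

lemma csum_eq_sum_wgt (Z : Fin n → Color k r) : csum r Z = ∑ i, wgt r (Z i) := by
  unfold csum csump wgt
  simp_rw [Finset.sum_mul]
  exact Finset.sum_comm

lemma wgt_zero_of (c : Color k r) (h : ∀ j, (c j).val = 0) : wgt r c = 0 := by
  unfold wgt
  exact Finset.sum_eq_zero fun p _ => by rw [h p, zero_mul, zero_mul]

lemma neg_val_zero_iff (c : Color k r) (t : Fin k) :
    ((-c) t).val = 0 ↔ (c t).val = 0 := by
  rw [ZMod.val_eq_zero, ZMod.val_eq_zero, Pi.neg_apply, neg_eq_zero]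

lemma wgt_add_wgt_neg (c : Color k r) (h : ¬ ∀ j, (c j).val = 0) :
    wgt r c + wgt r (-c) = totR k r := by
  push_neg at h
  obtain ⟨j0, hj0⟩ := h
  set P : Finset (Fin k) := Finset.univ.filter (fun p => (c p).val ≠ 0) with hP
  have hPne : P.Nonempty := ⟨j0, Finset.mem_filter.2 ⟨Finset.mem_univ _, hj0⟩⟩
  set p₀ := P.min' hPne with hp₀def
  have hp₀ : (c p₀).val ≠ 0 := (Finset.mem_filter.1 (P.min'_mem hPne)).2
  have hlt : ∀ t, t < p₀ → (c t).val = 0 := by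
    intro t ht
    by_contra hc
    exact absurd (P.min'_le t (Finset.mem_filter.2 ⟨Finset.mem_univ _, hc⟩)) (not_le.2 ht)
  have key : ∀ d : Color k r, (∀ t, (d t).val = 0 ↔ (c t).val = 0) →
      wgt r d = (d p₀).val * ∏ q ∈ Finset.univ.erase p₀, r q := by
    intro d hd
    unfold wgt
    rw [Finset.sum_eq_single p₀]
    · have h1 : (∏ t ∈ Finset.Iio p₀, if (d t).val = 0 then 1 else 0) = 1 :=
        Finset.prod_eq_one fun t ht =>
          if_pos ((hd t).2 (hlt t (Finset.mem_Iio.1 ht)))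
      rw [h1, mul_one]
    · intro p _ hne
      rcases lt_or_gt_of_ne hne with h1 | h1
      · rw [(hd p).2 (hlt p h1), zero_mul, zero_mul]
      · have h0 : (∏ t ∈ Finset.Iio p, if (d t).val = 0 then 1 else 0) = 0 :=
          Finset.prod_eq_zero (Finset.mem_Iio.2 h1)
            (if_neg (fun hc => hp₀ ((hd p₀).1 hc)))
        rw [h0, mul_zero, zero_mul]
    · intro hmem; exact absurd (Finset.mem_univ p₀) hmem
  rw [key c (fun t => Iff.rfl), key (-c) (neg_val_zero_iff c)]
  have hcne : c p₀ ≠ 0 := fun hc => hp₀ (by rw [hc, ZMod.val_zero])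
  have hval : ((-c) p₀).val = r p₀ - (c p₀).val := by
    rw [Pi.neg_apply, ZMod.neg_val, if_neg hcne]
  rw [hval, ← add_mul]
  have hlt' : (c p₀).val < r p₀ := ZMod.val_lt _
  have hsum : (c p₀).val + (r p₀ - (c p₀).val) = r p₀ := by omega
  rw [hsum, Finset.mul_prod_erase _ _ (Finset.mem_univ p₀)]
  rfl

lemma two_mul_exc (hodd : Odd (totR k r)) {π : GElt k n r} (hπ : wmul π π = wone) :
    2 * exc r π = totR k r * (Finset.univ.filter fun i => π.2 i ≠ i).card := by
  obtain ⟨hs, hcol, happ⟩ := winv_def hπ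
  have hnegZ : ∀ i, π.1 (π.2 i) = - π.1 i := fun i =>
    eq_neg_of_add_eq_zero_right (hcol i)
  have hcsum : 2 * csum r π.1 =
      totR k r * (Finset.univ.filter fun i => ¬ ∀ j, (π.1 i j).val = 0).card := by
    have h1 : csum r π.1 = ∑ i, wgt r (π.1 i) := csum_eq_sum_wgt _
    have h2 : csum r π.1 = ∑ i, wgt r (π.1 (π.2 i)) := by
      rw [h1]; exact (Equiv.sum_comp π.2 (fun i => wgt r (π.1 i))).symm
    have h3 : 2 * csum r π.1 = ∑ i, (wgt r (π.1 i) + wgt r (- π.1 i)) := by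
      rw [two_mul]; nth_rewrite 2 [h2]
      rw [h1, ← Finset.sum_add_distrib]
      exact Finset.sum_congr rfl fun i _ => by rw [hnegZ i]
    rw [h3]
    have h4 : ∀ i : Fin n, wgt r (π.1 i) + wgt r (- π.1 i) =
        if (∀ j, (π.1 i j).val = 0) then 0 else totR k r := by
      intro i
      split_ifs with h
      · rw [wgt_zero_of _ h, wgt_zero_of _ (fun j => (neg_val_zero_iff _ j).2 (h j)),
          Nat.add_zero]
      · exact wgt_add_wgt_neg _ h
    rw [Finset.sum_congr rfl fun i _ => h4 i, Finset.sum_ite, Finset.sum_const_zero,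
      zero_add, Finset.sum_const, smul_eq_mul, mul_comm]
  have hexcA : (Finset.univ.filter fun i =>
      (∀ j, (π.1 i j).val = 0) ∧ π.2 i ≠ i).card = 2 * excA r π := by
    have hAB : (Finset.univ.filter fun i => (∀ j, (π.1 i j).val = 0) ∧ i < π.2 i).card =
        (Finset.univ.filter fun i => (∀ j, (π.1 i j).val = 0) ∧ π.2 i < i).card := by
      apply Finset.card_bij' (fun i _ => π.2 i) (fun i _ => π.2 i)
      · intro i hi
        rw [Finset.mem_filter] at hi ⊢
        refine ⟨Finset.mem_univ _, fun j => ?_, by rw [happ i]; exact hi.2.2⟩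
        rw [hnegZ i]
        exact (neg_val_zero_iff _ j).2 (hi.2.1 j)
      · intro i hi
        rw [Finset.mem_filter] at hi ⊢
        refine ⟨Finset.mem_univ _, fun j => ?_, by rw [happ i]; exact hi.2.2⟩
        rw [hnegZ i]
        exact (neg_val_zero_iff _ j).2 (hi.2.1 j)
      · intro i _; exact happ i
      · intro i _; exact happ i
    have hsplit : (Finset.univ.filter fun i => (∀ j, (π.1 i j).val = 0) ∧ π.2 i ≠ i) =
        (Finset.univ.filter fun i => (∀ j, (π.1 i j).val = 0) ∧ i < π.2 i) ∪
        (Finset.univ.filter fun i => (∀ j, (π.1 i j).val = 0) ∧ π.2 i < i) := by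
      ext i
      simp only [Finset.mem_filter, Finset.mem_union, Finset.mem_univ, true_and]
      constructor
      · rintro ⟨hz, hne⟩
        rcases lt_or_gt_of_ne (Ne.symm hne) with h | h
        · exact Or.inl ⟨hz, h⟩
        · exact Or.inr ⟨hz, h⟩
      · rintro (⟨hz, h⟩ | ⟨hz, h⟩)
        · exact ⟨hz, ne_of_gt h⟩
        · exact ⟨hz, ne_of_lt h⟩
    have hdisj : Disjoint
        (Finset.univ.filter fun i => (∀ j, (π.1 i j).val = 0) ∧ i < π.2 i)
        (Finset.univ.filter fun i => (∀ j, (π.1 i j).val = 0) ∧ π.2 i < i) := by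
      rw [Finset.disjoint_left]
      intro i hA hB
      rw [Finset.mem_filter] at hA hB
      exact absurd hB.2.2 (not_lt.2 (le_of_lt hA.2.2))
    rw [hsplit, Finset.card_union_of_disjoint hdisj, ← hAB, two_mul]
    rfl
  have hmoved : (Finset.univ.filter fun i => π.2 i ≠ i).card =
      (Finset.univ.filter fun i => (∀ j, (π.1 i j).val = 0) ∧ π.2 i ≠ i).card +
      (Finset.univ.filter fun i => ¬ ∀ j, (π.1 i j).val = 0).card := by
    have hnz_moved : ∀ i : Fin n, ¬ (∀ j, (π.1 i j).val = 0) → π.2 i ≠ i := by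
      intro i h hfix
      apply h
      intro j
      rw [fixed_zero hodd hπ i hfix]
      simp
    have e1 : (Finset.univ.filter fun i => π.2 i ≠ i).filter
        (fun i => ∀ j, (π.1 i j).val = 0) =
        Finset.univ.filter fun i => (∀ j, (π.1 i j).val = 0) ∧ π.2 i ≠ i := by
      rw [Finset.filter_filter]
      ext i
      simp only [Finset.mem_filter, Finset.mem_univ, true_and]
      exact and_comm
    have e2 : (Finset.univ.filter fun i => π.2 i ≠ i).filter
        (fun i => ¬ ∀ j, (π.1 i j).val = 0) =
        Finset.univ.filter fun i => ¬ ∀ j, (π.1 i j).val = 0 := by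
      rw [Finset.filter_filter]
      ext i
      simp only [Finset.mem_filter, Finset.mem_univ, true_and]
      exact ⟨fun h => h.2, fun h => ⟨hnz_moved i h, h⟩⟩
    rw [← e1, ← e2]
    exact (Finset.card_filter_add_card_filter_not
      (fun i => ∀ j, (π.1 i j).val = 0)).symm
  calc 2 * exc r π
      = totR k r * (2 * excA r π) + 2 * csum r π.1 := by unfold exc; ring
    _ = totR k r * ((Finset.univ.filter fun i =>
          (∀ j, (π.1 i j).val = 0) ∧ π.2 i ≠ i).card +
          (Finset.univ.filter fun i => ¬ ∀ j, (π.1 i j).val = 0).card) := by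
        rw [← hexcA, Nat.mul_add, hcsum]
    _ = totR k r * (Finset.univ.filter fun i => π.2 i ≠ i).card := by rw [← hmoved]

lemma swap_comm_perm (σ : Equiv.Perm (Fin n)) (a b : Fin n)
    (h : (σ a = b ∧ σ b = a) ∨ (σ a = a ∧ σ b = b)) :
    Equiv.swap a b * σ = σ * Equiv.swap a b := by
  ext i
  simp only [Equiv.Perm.mul_apply]
  rcases eq_or_ne i a with rfl | hia
  · rw [Equiv.swap_apply_left]
    rcases h with ⟨h1, h2⟩ | ⟨h1, h2⟩
    · rw [h1, Equiv.swap_apply_right, h2]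
    · rw [h1, Equiv.swap_apply_left, h2]
  rcases eq_or_ne i b with rfl | hib
  · rw [Equiv.swap_apply_right]
    rcases h with ⟨h1, h2⟩ | ⟨h1, h2⟩
    · rw [h2, Equiv.swap_apply_left, h1]
    · rw [h2, Equiv.swap_apply_right, h1]
  have hσa : σ i ≠ a := by
    rcases h with ⟨h1, h2⟩ | ⟨h1, h2⟩
    · intro hc; exact hib (σ.injective (hc.trans h2.symm))
    · intro hc; exact hia (σ.injective (hc.trans h1.symm))
  have hσb : σ i ≠ b := by
    rcases h with ⟨h1, h2⟩ | ⟨h1, h2⟩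
    · intro hc; exact hia (σ.injective (hc.trans h1.symm))
    · intro hc; exact hib (σ.injective (hc.trans h2.symm))
  rw [Equiv.swap_apply_of_ne_of_ne hσa hσb, Equiv.swap_apply_of_ne_of_ne hia hib]

lemma swap_mul_sq_one (σ : Equiv.Perm (Fin n)) (hσ : σ * σ = 1) (a b : Fin n)
    (h : (σ a = b ∧ σ b = a) ∨ (σ a = a ∧ σ b = b)) :
    (Equiv.swap a b * σ) * (Equiv.swap a b * σ) = 1 := by
  have hc := swap_comm_perm σ a b h
  set w := Equiv.swap a b with hw
  calc w * σ * (w * σ) = w * (σ * w * σ) := by rw [mul_assoc, ← mul_assoc σ w σ]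
    _ = w * (w * σ * σ) := by rw [← hc]
    _ = w * w * (σ * σ) := by rw [← mul_assoc, ← mul_assoc, mul_assoc]
    _ = 1 := by rw [hw, Equiv.swap_mul_self, hσ, one_mul]

lemma swap_mul_apply_ne (σ : Equiv.Perm (Fin n)) (a b : Fin n)
    (h : (σ a = b ∧ σ b = a) ∨ (σ a = a ∧ σ b = b)) (i : Fin n)
    (hia : i ≠ a) (hib : i ≠ b) :
    (Equiv.swap a b * σ) i = σ i := by
  rw [Equiv.Perm.mul_apply]
  have hσa : σ i ≠ a := by
    rcases h with ⟨h1, h2⟩ | ⟨h1, h2⟩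
    · intro hc; exact hib (σ.injective (hc.trans h2.symm))
    · intro hc; exact hia (σ.injective (hc.trans h1.symm))
  have hσb : σ i ≠ b := by
    rcases h with ⟨h1, h2⟩ | ⟨h1, h2⟩
    · intro hc; exact hia (σ.injective (hc.trans h1.symm))
    · intro hc; exact hib (σ.injective (hc.trans h2.symm))
  exact Equiv.swap_apply_of_ne_of_ne hσa hσb

lemma card_color : Fintype.card (Color k r) = totR k r := by
  rw [Fintype.card_pi]
  exact Finset.prod_congr rfl fun j _ => ZMod.card (r j)

/-- involutions with prescribed set of moved points -/
def MM (k n : ℕ) (r : Fin k → ℕ) [∀ j, NeZero (r j)] (s : Finset (Fin n)) :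
    Finset (GElt k n r) :=
  Finset.univ.filter fun π =>
    wmul π π = wone ∧ Finset.univ.filter (fun i => π.2 i ≠ i) = s

lemma mem_MM {s : Finset (Fin n)} {π : GElt k n r} :
    π ∈ MM k n r s ↔ wmul π π = wone ∧
      Finset.univ.filter (fun i => π.2 i ≠ i) = s := by
  simp [MM]

lemma MM_moved {s : Finset (Fin n)} {π : GElt k n r} (hπ : π ∈ MM k n r s) :
    ∀ i, π.2 i ≠ i ↔ i ∈ s := by
  intro i
  rw [← (mem_MM.1 hπ).2]
  simp

lemma F_mm (hodd : Odd (totR k r)) {s : Finset (Fin n)} {a : Fin n} (ha : a ∈ s)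
    {π : GElt k n r} (hπ : π ∈ MM k n r s) :
    π.2 a ∈ s.erase a ∧
    ((fun i => if i = a ∨ i = π.2 a then 0 else π.1 i : Fin n → Color k r),
      Equiv.swap a (π.2 a) * π.2) ∈ MM k n r (s \ {a, π.2 a}) := by
  obtain ⟨hinv, hsupp⟩ := mem_MM.1 hπ
  obtain ⟨hsq, hcol, happ⟩ := winv_def hinv
  have hmv := MM_moved hπ
  have hba : π.2 a ≠ a := (hmv a).2 ha
  have hσb : π.2 (π.2 a) = a := happ a
  have hbS : π.2 a ∈ s := (hmv _).1 (by rw [hσb]; exact Ne.symm hba)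
  have hpair : π.2 a = π.2 a ∧ π.2 (π.2 a) = a := ⟨rfl, hσb⟩
  have hσ'a : (Equiv.swap a (π.2 a) * π.2) a = a := by
    rw [Equiv.Perm.mul_apply, Equiv.swap_apply_right]
  have hσ'b : (Equiv.swap a (π.2 a) * π.2) (π.2 a) = π.2 a := by
    rw [Equiv.Perm.mul_apply, hσb, Equiv.swap_apply_left]
  have hσ'ne : ∀ i, i ≠ a → i ≠ π.2 a → (Equiv.swap a (π.2 a) * π.2) i = π.2 i :=
    fun i h1 h2 => swap_mul_apply_ne π.2 a (π.2 a) (Or.inl hpair) i h1 h2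
  refine ⟨Finset.mem_erase.2 ⟨hba, hbS⟩, mem_MM.2 ⟨?_, ?_⟩⟩
  · apply winv_of
    · exact swap_mul_sq_one π.2 hsq a (π.2 a) (Or.inl hpair)
    · intro i
      by_cases hia : i = a ∨ i = π.2 a
      · rcases hia with rfl | rfl
        · simp [hσ'a]
        · simp [hσ'b]
      · push_neg at hia
        rw [hσ'ne i hia.1 hia.2]
        have h1 : ¬ (π.2 i = a ∨ π.2 i = π.2 a) := by
          rintro (hc | hc)
          · exact hia.2 (π.2.injective (hc.trans hσb.symm))
          · exact hia.1 (π.2.injective hc)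
        have h2 : ¬ (i = a ∨ i = π.2 a) := by
          rintro (hc | hc)
          · exact hia.1 hc
          · exact hia.2 hc
        simp only [if_neg h2, if_neg h1]
        exact hcol i
  · ext i
    simp only [Finset.mem_filter, Finset.mem_univ, true_and, Finset.mem_sdiff,
      Finset.mem_insert, Finset.mem_singleton]
    rcases eq_or_ne i a with rfl | h1
    · simp [hσ'a]
    rcases eq_or_ne i (π.2 a) with rfl | h2
    · simp [hσ'b]
    rw [hσ'ne i h1 h2, hmv i]
    simp [h1, h2]

lemma G_mm (hodd : Odd (totR k r)) {s : Finset (Fin n)} {a b : Fin n} (ha : a ∈ s)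
    (hb : b ∈ s.erase a) (c : Color k r) {ρ : GElt k n r}
    (hρ : ρ ∈ MM k n r (s \ {a, b})) :
    ((fun i => if i = a then c else if i = b then -c else ρ.1 i : Fin n → Color k r),
      Equiv.swap a b * ρ.2) ∈ MM k n r s := by
  obtain ⟨hbna, hbS⟩ := Finset.mem_erase.1 hb
  obtain ⟨hinv, hsupp⟩ := mem_MM.1 hρ
  obtain ⟨hsq, hcol, happ⟩ := winv_def hinv
  have hmv := MM_moved hρ
  have hmv' : ∀ i, ρ.2 i ≠ i ↔ (i ∈ s ∧ i ≠ a ∧ i ≠ b) := by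
    intro i
    rw [hmv i]
    simp [Finset.mem_sdiff]
  have ha' : ρ.2 a = a := by
    by_contra hc
    exact ((hmv' a).1 hc).2.1 rfl
  have hb' : ρ.2 b = b := by
    by_contra hc
    exact ((hmv' b).1 hc).2.2 rfl
  have hfix : ρ.2 a = a ∧ ρ.2 b = b := ⟨ha', hb'⟩
  have hna : (Equiv.swap a b * ρ.2) a = b := by
    rw [Equiv.Perm.mul_apply, ha', Equiv.swap_apply_left]
  have hnb : (Equiv.swap a b * ρ.2) b = a := by
    rw [Equiv.Perm.mul_apply, hb', Equiv.swap_apply_right]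
  have hnne : ∀ i, i ≠ a → i ≠ b → (Equiv.swap a b * ρ.2) i = ρ.2 i :=
    fun i h1 h2 => swap_mul_apply_ne ρ.2 a b (Or.inr hfix) i h1 h2
  refine mem_MM.2 ⟨?_, ?_⟩
  · apply winv_of
    · exact swap_mul_sq_one ρ.2 hsq a b (Or.inr hfix)
    · intro i
      rcases eq_or_ne i a with rfl | h1
      · simp [hna, hbna]
      rcases eq_or_ne i b with rfl | h2
      · simp [hnb, hbna]
      · rw [hnne i h1 h2]
        have hra : ρ.2 i ≠ a := fun hc => h1 (ρ.2.injective (hc.trans ha'.symm))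
        have hrb : ρ.2 i ≠ b := fun hc => h2 (ρ.2.injective (hc.trans hb'.symm))
        simp only [if_neg h1, if_neg h2, if_neg hra, if_neg hrb]
        exact hcol i
  · ext i
    simp only [Finset.mem_filter, Finset.mem_univ, true_and]
    rcases eq_or_ne i a with rfl | h1
    · rw [hna]
      simp [hbna, ha]
    rcases eq_or_ne i b with rfl | h2
    · rw [hnb]
      simp [Ne.symm hbna, hbS]
    rw [hnne i h1 h2, hmv' i]
    simp [h1, h2]

def gfun (R : ℕ) : ℕ → ℕ
  | 0 => 1
  | y + 1 => (2 * y + 1) * (R * gfun R y)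

lemma card_MM (hodd : Odd (totR k r)) (s : Finset (Fin n)) :
    (MM k n r s).card = if 2 ∣ s.card then gfun (totR k r) (s.card / 2) else 0 := by
  induction s using Finset.strongInduction with
  | _ s ih =>
  rcases s.eq_empty_or_nonempty with rfl | hne
  · rw [Finset.card_empty, if_pos (dvd_zero 2)]
    have hMM : MM k n r (∅ : Finset (Fin n)) = {wone} := by
      ext π
      rw [mem_MM, Finset.mem_singleton]
      constructor
      · rintro ⟨h1, h2⟩
        have hfix : ∀ i, π.2 i = i := by
          intro i
          by_contra hc
          have hmem : i ∈ Finset.univ.filter (fun i => π.2 i ≠ i) :=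
            Finset.mem_filter.2 ⟨Finset.mem_univ _, hc⟩
          rw [h2] at hmem
          exact absurd hmem (Finset.notMem_empty i)
        have hz : π.1 = fun _ => (0 : Color k r) :=
          funext fun i => fixed_zero hodd h1 i (hfix i)
        exact Prod.ext hz (Equiv.ext hfix)
      · rintro rfl
        constructor
        · exact winv_of _ (one_mul 1) (fun i => add_zero 0)
        · ext i
          simp [wone]
    rw [hMM, Finset.card_singleton]
    rfl
  · set a := s.min' hne with hadef
    have haS : a ∈ s := s.min'_mem hne
    have key : (MM k n r s).card =
        ∑ b ∈ s.erase a, totR k r * (MM k n r (s \ {a, b})).card := by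
      have hbij : (MM k n r s).card = ((s.erase a).sigma fun b =>
          (Finset.univ : Finset (Color k r)) ×ˢ MM k n r (s \ {a, b})).card := by
        refine Finset.card_bij'
          (fun (π : GElt k n r) (_ : π ∈ MM k n r s) =>
            (⟨π.2 a, (π.1 a, ((fun i => if i = a ∨ i = π.2 a then 0 else π.1 i),
              Equiv.swap a (π.2 a) * π.2))⟩ : Σ _ : Fin n, Color k r × GElt k n r))
          (fun x _ =>
            ((fun i => if i = a then x.2.1 else if i = x.1 then - x.2.1 else x.2.2.1 i),
              Equiv.swap a x.1 * x.2.2.2)) ?_ ?_ ?_ ?_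
        · intro π hπ
          obtain ⟨h1, h2⟩ := F_mm hodd haS hπ
          exact Finset.mem_sigma.2 ⟨h1, Finset.mem_product.2 ⟨Finset.mem_univ _, h2⟩⟩
        · rintro ⟨b, c, ρ⟩ hx
          rw [Finset.mem_sigma, Finset.mem_product] at hx
          exact G_mm hodd haS hx.1 c hx.2.2
        · intro π hπ
          obtain ⟨hinv, hsupp⟩ := mem_MM.1 hπ
          obtain ⟨hsq, hcol, happ⟩ := winv_def hinv
          dsimp only
          refine Prod.ext ?_ ?_
          · funext i
            dsimp only
            rcases eq_or_ne i a with rfl | h1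
            · rw [if_pos rfl]
            · rw [if_neg h1]
              rcases eq_or_ne i (π.2 a) with rfl | h2
              · rw [if_pos rfl]
                exact (eq_neg_of_add_eq_zero_right (hcol a)).symm
              · rw [if_neg h2, if_neg (by rintro (hc | hc); exacts [h1 hc, h2 hc])]
          · dsimp only
            rw [← mul_assoc, Equiv.swap_mul_self, one_mul]
        · rintro ⟨b, c, ρ⟩ hx
          rw [Finset.mem_sigma, Finset.mem_product] at hx
          have hb := hx.1
          have hρ := hx.2.2
          obtain ⟨hbna, hbS⟩ := Finset.mem_erase.1 hb
          obtain ⟨hinv, hsupp⟩ := mem_MM.1 hρ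
          have hmv := MM_moved hρ
          have ha' : ρ.2 a = a := by
            by_contra hc
            have := (hmv a).1 hc
            simp [Finset.mem_sdiff] at this
          have hb' : ρ.2 b = b := by
            by_contra hc
            have := (hmv b).1 hc
            simp [Finset.mem_sdiff] at this
          have hna : (Equiv.swap a b * ρ.2) a = b := by
            rw [Equiv.Perm.mul_apply, ha', Equiv.swap_apply_left]
          dsimp only
          simp only [hna]
          refine congrArg (Sigma.mk b) ?_
          refine Prod.ext ?_ ?_
          · simp
          · refine Prod.ext ?_ ?_
            · funext i
              dsimp only
              rcases eq_or_ne i a with rfl | h1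
              · rw [if_pos (Or.inl rfl)]
                exact (fixed_zero hodd hinv a ha').symm
              rcases eq_or_ne i b with rfl | h2
              · rw [if_pos (Or.inr rfl)]
                exact (fixed_zero hodd hinv _ hb').symm
              · rw [if_neg (by rintro (hc | hc); exacts [h1 hc, h2 hc]),
                  if_neg h1, if_neg h2]
            · dsimp only
              rw [← mul_assoc, Equiv.swap_mul_self, one_mul]
      rw [hbij, Finset.card_sigma]
      exact Finset.sum_congr rfl fun b _ => by
        rw [Finset.card_product, Finset.card_univ, card_color]
    rw [key]
    have hsub : ∀ b ∈ s.erase a, ({a, b} : Finset (Fin n)) ⊆ s := by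
      intro b hb x hx
      rw [Finset.mem_insert, Finset.mem_singleton] at hx
      rcases hx with rfl | rfl
      · exact haS
      · exact (Finset.mem_erase.1 hb).2
    have hcard2 : ∀ b ∈ s.erase a, (s \ {a, b}).card = s.card - 2 := by
      intro b hb
      rw [Finset.card_sdiff_of_subset (hsub b hb)]
      have : ({a, b} : Finset (Fin n)).card = 2 := by
        rw [Finset.card_insert_of_notMem
          (by rw [Finset.mem_singleton]; exact Ne.symm (Finset.mem_erase.1 hb).1),
          Finset.card_singleton]
      rw [this]
    have hrw : ∑ b ∈ s.erase a, totR k r * (MM k n r (s \ {a, b})).card =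
        ∑ _b ∈ s.erase a, totR k r *
          (if 2 ∣ s.card - 2 then gfun (totR k r) ((s.card - 2) / 2) else 0) := by
      refine Finset.sum_congr rfl fun b hb => ?_
      rw [ih _ (Finset.sdiff_ssubset (hsub b hb) (Finset.insert_nonempty _ _)),
        hcard2 b hb]
    rw [hrw, Finset.sum_const, smul_eq_mul, Finset.card_erase_of_mem haS]
    have hC1 : 1 ≤ s.card := Finset.card_pos.2 hne
    rcases Nat.even_or_odd s.card with hev | hod
    · have h2 : 2 ∣ s.card := hev.two_dvd
      obtain ⟨y, hy⟩ : ∃ y, s.card = 2 * y + 2 := by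
        obtain ⟨t, ht⟩ := h2
        exact ⟨t - 1, by omega⟩
      rw [if_pos (by omega), if_pos h2]
      have e1 : (s.card - 2) / 2 = y := by omega
      have e2 : s.card / 2 = y + 1 := by omega
      have e3 : s.card - 1 = 2 * y + 1 := by omega
      rw [e1, e2, e3]
      rfl
    · have hmod : s.card % 2 = 1 := Nat.odd_iff.1 hod
      have h2 : ¬ 2 ∣ s.card := by omega
      rw [if_neg h2]
      rcases eq_or_ne s.card 1 with h1 | h1
      · rw [h1]
        simp
      · have h2' : ¬ 2 ∣ s.card - 2 := by omega
        rw [if_neg h2', Nat.mul_zero, Nat.mul_zero]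

lemma gfun_succ (R y : ℕ) : gfun R (y + 1) = (2 * y + 1) * (R * gfun R y) := rfl

lemma gfun_mul (R y : ℕ) :
    gfun R y * (y.factorial * 2 ^ y) = (2 * y).factorial * R ^ y := by
  induction y with
  | zero => simp [gfun]
  | succ y ih =>
    have h2 : 2 * (y + 1) = (2 * y + 1) + 1 := by ring
    rw [gfun_succ, h2, Nat.factorial_succ, Nat.factorial_succ, Nat.factorial_succ,
      pow_succ, pow_succ]
    calc (2 * y + 1) * (R * gfun R y) * ((y + 1) * y.factorial * (2 ^ y * 2))
        = (2 * y + 1 + 1) * ((2 * y + 1) * (gfun R y * (y.factorial * 2 ^ y))) * R := by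
          ring
      _ = (2 * y + 1 + 1) * ((2 * y + 1) * ((2 * y).factorial * R ^ y)) * R := by rw [ih]
      _ = (2 * y + 1 + 1) * ((2 * y + 1) * (2 * y).factorial) * (R ^ y * R) := by ring

lemma count_main (hodd : Odd (totR k r)) (m : ℕ) :
    (Finset.univ.filter
      (fun π : GElt k n r => wmul π π = wone ∧ exc r π = m)).card =
    if totR k r ∣ m ∧ 2 * (m / totR k r) ≤ n then
      n.choose (2 * (m / totR k r)) * gfun (totR k r) (m / totR k r) else 0 := by
  have hR0 : 0 < totR k r := Nat.pos_of_ne_zero totR_ne_zero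
  by_cases hcond : totR k r ∣ m ∧ 2 * (m / totR k r) ≤ n
  · rw [if_pos hcond]
    obtain ⟨hdvd, hyn⟩ := hcond
    set y := m / totR k r with hy
    have hm : m = totR k r * y := by
      rw [hy, Nat.mul_div_cancel' hdvd]
    have hiff : ∀ π : GElt k n r, wmul π π = wone →
        (exc r π = m ↔ (Finset.univ.filter fun i => π.2 i ≠ i).card = 2 * y) := by
      intro π h1
      have htm := two_mul_exc hodd h1
      constructor
      · intro h2
        rw [h2] at htm
        have : totR k r * (2 * y) = totR k r *
            (Finset.univ.filter fun i => π.2 i ≠ i).card := by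
          rw [← htm, hm]; ring
        exact (Nat.eq_of_mul_eq_mul_left hR0 this).symm
      · intro h2
        rw [h2] at htm
        have : 2 * exc r π = 2 * m := by rw [htm, hm]; ring
        omega
    have hsetEq : (Finset.univ.filter
        (fun π : GElt k n r => wmul π π = wone ∧ exc r π = m)) =
        Finset.univ.filter (fun π : GElt k n r => wmul π π = wone ∧
          (Finset.univ.filter fun i => π.2 i ≠ i).card = 2 * y) := by
      refine Finset.filter_congr fun π _ => ?_
      constructor
      · rintro ⟨h1, h2⟩; exact ⟨h1, (hiff π h1).1 h2⟩
      · rintro ⟨h1, h2⟩; exact ⟨h1, (hiff π h1).2 h2⟩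
    rw [hsetEq]
    rw [Finset.card_eq_sum_card_fiberwise
      (f := fun π : GElt k n r => Finset.univ.filter fun i => π.2 i ≠ i)
      (t := Finset.powersetCard (2 * y) Finset.univ)
      (fun π hπ => Finset.mem_powersetCard.2
        ⟨Finset.subset_univ _, (Finset.mem_filter.1 hπ).2.2⟩)]
    have hfib : ∀ b ∈ Finset.powersetCard (2 * y) (Finset.univ : Finset (Fin n)),
        ((Finset.univ.filter (fun π : GElt k n r => wmul π π = wone ∧
          (Finset.univ.filter fun i => π.2 i ≠ i).card = 2 * y)).filter
          (fun π => Finset.univ.filter (fun i => π.2 i ≠ i) = b)).card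
          = gfun (totR k r) y := by
      intro b hb
      have hbc : b.card = 2 * y := (Finset.mem_powersetCard.1 hb).2
      have : ((Finset.univ.filter (fun π : GElt k n r => wmul π π = wone ∧
          (Finset.univ.filter fun i => π.2 i ≠ i).card = 2 * y)).filter
          (fun π => Finset.univ.filter (fun i => π.2 i ≠ i) = b)) = MM k n r b := by
        ext π
        rw [Finset.mem_filter, Finset.mem_filter, mem_MM]
        constructor
        · rintro ⟨⟨-, h1, -⟩, h3⟩
          exact ⟨h1, h3⟩
        · rintro ⟨h1, h2⟩
          exact ⟨⟨Finset.mem_univ _, h1, by rw [h2, hbc]⟩, h2⟩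
      rw [this, card_MM hodd, hbc, if_pos ⟨y, by ring⟩]
      congr 1
      omega
    rw [Finset.sum_congr rfl hfib, Finset.sum_const, smul_eq_mul,
      Finset.card_powersetCard, Finset.card_univ, Fintype.card_fin]
  · rw [if_neg hcond]
    have hempty : (Finset.univ.filter
        (fun π : GElt k n r => wmul π π = wone ∧ exc r π = m)) = ∅ := by
      rw [Finset.filter_eq_empty_iff]
      rintro π - ⟨h1, h2⟩
      have htm := two_mul_exc hodd h1
      rw [h2] at htm
      have hdvd2 : totR k r ∣ 2 * m := Dvd.intro _ htm.symm
      have hcop : Nat.Coprime (totR k r) 2 := Nat.coprime_two_right.2 hodd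
      have hdvdm : totR k r ∣ m := hcop.dvd_of_dvd_mul_left hdvd2
      have hcard : (Finset.univ.filter fun i => π.2 i ≠ i).card ≤ n := by
        have := Finset.card_filter_le (Finset.univ : Finset (Fin n))
          (fun i => π.2 i ≠ i)
        simpa using this
      rcases not_and_or.1 hcond with hA | hB
      · exact hA hdvdm
      · apply hB
        have hmeq : totR k r * (m / totR k r) = m := Nat.mul_div_cancel' hdvdm
        have heq : totR k r * (2 * (m / totR k r)) = totR k r *
            (Finset.univ.filter fun i => π.2 i ≠ i).card := by
          rw [← htm]
          nth_rewrite 2 [← hmeq]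
          ring
        have hc2 := Nat.eq_of_mul_eq_mul_left hR0 heq
        omega
    rw [hempty, Finset.card_empty]

end AuxCount

theorem count_involutions_exc_odd (k n m : ℕ) (r : Fin k → ℕ) [∀ j, NeZero (r j)]
    (hr : ∀ j, 1 ≤ r j) (hodd : Odd (totR k r)) :
    ((Finset.univ.filter
        (fun π : GElt k n r => wmul π π = wone ∧ exc r π = m)).card : ℚ) =
      if totR k r ∣ m ∧ 2 * (m / totR k r) ≤ n then
        ((n.factorial : ℚ) * (totR k r : ℚ) ^ (m / totR k r)) /
          (((m / totR k r).factorial : ℚ) *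
            ((n - 2 * (m / totR k r)).factorial : ℚ) * 2 ^ (m / totR k r))
      else 0 := by
  rw [count_main hodd m]
  split_ifs with hcond
  · obtain ⟨hdvd, hyn⟩ := hcond
    set y := m / totR k r with hy
    have hnat : n.choose (2 * y) * gfun (totR k r) y *
        (y.factorial * (n - 2 * y).factorial * 2 ^ y) =
        n.factorial * totR k r ^ y := by
      calc n.choose (2 * y) * gfun (totR k r) y *
            (y.factorial * (n - 2 * y).factorial * 2 ^ y)
          = n.choose (2 * y) * (gfun (totR k r) y * (y.factorial * 2 ^ y)) *
            (n - 2 * y).factorial := by ring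
        _ = n.choose (2 * y) * ((2 * y).factorial * totR k r ^ y) *
            (n - 2 * y).factorial := by rw [gfun_mul]
        _ = n.choose (2 * y) * (2 * y).factorial * (n - 2 * y).factorial *
            totR k r ^ y := by ring
        _ = n.factorial * totR k r ^ y := by
            rw [Nat.choose_mul_factorial_mul_factorial hyn]
    have h1 : ((y.factorial : ℚ)) ≠ 0 := Nat.cast_ne_zero.2 (Nat.factorial_ne_zero y)
    have h2 : (((n - 2 * y).factorial : ℚ)) ≠ 0 :=
      Nat.cast_ne_zero.2 (Nat.factorial_ne_zero _)
    have h3 : ((2 : ℚ) ^ y) ≠ 0 := pow_ne_zero y two_ne_zero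
    rw [eq_div_iff (mul_ne_zero (mul_ne_zero h1 h2) h3)]
    exact_mod_cast hnat
  · simp
end
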